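/- arXiv:2603.19401 — 6 statements merged into one kernel-verified Lean document; each statement's English description precedes it below -/
import Mathlib

section
/- For every integer n ≥ 1 and all integers k₁,…,k_n ≥ 1, the second column of the product A₃(k₁)A₃(k₂)⋯A₃(k_n) has the largest L¹-norm among the three columns, i.e. ‖A₃(k₁)⋯A₃(k_n)‖_c = Σᵢ (A₃(k₁)⋯A₃(k_n))_{i2}; similarly, the third column of the product B₃(k₁)B₃(k₂)⋯B₃(k_n) has the largest L¹-norm among its three columns, i.e. ‖B₃(k₁)⋯B₃(k_n)‖_c = Σᵢ (B₃(k₁)⋯B₃(k_n))_{i3}. -/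
/-- The Bruin–Troubetzkoy matrix `A₃(k)` with rows `(0, k, k−1)`, `(1, 0, 0)`, `(0, 1, 1)`. -/
def A3 (k : ℤ) : Matrix (Fin 3) (Fin 3) ℝ :=
  !![0, (k : ℝ), (k : ℝ) - 1; 1, 0, 0; 0, 1, 1]

/-- The matrix `B₃(k)` with rows `(0, 1, 0)`, `(1, 0, 1)`, `(k−1, 0, k)`. -/
def B3 (k : ℤ) : Matrix (Fin 3) (Fin 3) ℝ :=
  !![0, 1, 0; 1, 0, 1; (k : ℝ) - 1, 0, (k : ℝ)]

/-- The column norm of a 3×3 real matrix: the largest `L¹`-norm of a column. -/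
noncomputable def cnorm (X : Matrix (Fin 3) (Fin 3) ℝ) : ℝ :=
  Finset.univ.sup' Finset.univ_nonempty (fun j : Fin 3 => ∑ i : Fin 3, |X i j|)

open Matrix

/-- Invariant for `A₃` products. -/
def IA (v : Fin 3 → ℝ) : Prop :=
  0 ≤ v 0 ∧ v 0 ≤ v 1 ∧ v 2 ≤ v 1 ∧ v 1 ≤ v 0 + v 2

/-- Invariant for `B₃` products. -/
def IB (v : Fin 3 → ℝ) : Prop :=
  0 ≤ v 0 ∧ 0 ≤ v 1 ∧ 0 ≤ v 2 ∧ v 0 ≤ v 1 + v 2 ∧ v 0 ≤ v 2 ∧ v 1 ≤ v 2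

lemma vecMul_A3 (v : Fin 3 → ℝ) (k : ℤ) :
    v ᵥ* A3 k = ![v 1, v 0 * k + v 2, v 0 * (k - 1) + v 2] := by
  funext j
  fin_cases j <;>
    simp [A3, Matrix.vecMul, dotProduct, Fin.sum_univ_three] <;> ring

lemma vecMul_B3 (v : Fin 3 → ℝ) (k : ℤ) :
    v ᵥ* B3 k = ![v 1 + v 2 * (k - 1), v 0, v 1 + v 2 * k] := by
  funext j
  fin_cases j <;>
    simp [B3, Matrix.vecMul, dotProduct, Fin.sum_univ_three, Matrix.vecHead, Matrix.vecTail] <;> ring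

lemma IA_step (v : Fin 3 → ℝ) (k : ℤ) (hk : 1 ≤ k) (hv : IA v) : IA (v ᵥ* A3 k) := by
  obtain ⟨h0, h1, h2, h3⟩ := hv
  have hk' : (1 : ℝ) ≤ (k : ℝ) := by exact_mod_cast hk
  rw [vecMul_A3]
  refine ⟨by simpa using le_trans h0 h1, ?_, ?_, ?_⟩ <;>
    simp only [Matrix.cons_val_zero, Matrix.cons_val_one, Matrix.head_cons,
      Matrix.cons_val_two, Matrix.tail_cons] <;> nlinarith

lemma IB_step (v : Fin 3 → ℝ) (k : ℤ) (hk : 1 ≤ k) (hv : IB v) : IB (v ᵥ* B3 k) := by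
  obtain ⟨h0, h1, h2, h3, h4, h5⟩ := hv
  have hk' : (1 : ℝ) ≤ (k : ℝ) := by exact_mod_cast hk
  rw [vecMul_B3]
  refine ⟨?_, ?_, ?_, ?_, ?_, ?_⟩ <;>
    simp only [Matrix.cons_val_zero, Matrix.cons_val_one, Matrix.head_cons,
      Matrix.cons_val_two, Matrix.tail_cons] <;> nlinarith

lemma IA_prod : ∀ l : List ℤ, (∀ x ∈ l, 1 ≤ x) → ∀ v : Fin 3 → ℝ, IA v →
    IA (v ᵥ* (l.map A3).prod) := by
  intro l
  induction l with
  | nil => intro _ v hv; simpa using hv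
  | cons a t ih =>
      intro hl v hv
      have : v ᵥ* ((a :: t).map A3).prod = (v ᵥ* A3 a) ᵥ* (t.map A3).prod := by
        simp [Matrix.vecMul_vecMul]
      rw [this]
      exact ih (fun x hx => hl x (List.mem_cons_of_mem _ hx)) _
        (IA_step v a (hl a (List.mem_cons_self)) hv)

lemma IB_prod : ∀ l : List ℤ, (∀ x ∈ l, 1 ≤ x) → ∀ v : Fin 3 → ℝ, IB v →
    IB (v ᵥ* (l.map B3).prod) := by
  intro l
  induction l with
  | nil => intro _ v hv; simpa using hv
  | cons a t ih =>
      intro hl v hv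
      have : v ᵥ* ((a :: t).map B3).prod = (v ᵥ* B3 a) ᵥ* (t.map B3).prod := by
        simp [Matrix.vecMul_vecMul]
      rw [this]
      exact ih (fun x hx => hl x (List.mem_cons_of_mem _ hx)) _
        (IB_step v a (hl a (List.mem_cons_self)) hv)

lemma A3_nonneg (k : ℤ) (hk : 1 ≤ k) : ∀ i j, 0 ≤ A3 k i j := by
  have hk' : (1 : ℝ) ≤ (k : ℝ) := by exact_mod_cast hk
  intro i j
  fin_cases i <;> fin_cases j <;> simp [A3] <;> linarith

lemma B3_nonneg (k : ℤ) (hk : 1 ≤ k) : ∀ i j, 0 ≤ B3 k i j := by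
  have hk' : (1 : ℝ) ≤ (k : ℝ) := by exact_mod_cast hk
  intro i j
  fin_cases i <;> fin_cases j <;> simp [B3, Matrix.vecHead, Matrix.vecTail] <;> linarith

lemma prod_nonneg_of (M : ℤ → Matrix (Fin 3) (Fin 3) ℝ)
    (hM : ∀ x : ℤ, 1 ≤ x → ∀ i j, 0 ≤ M x i j) :
    ∀ l : List ℤ, (∀ x ∈ l, 1 ≤ x) → ∀ i j, 0 ≤ (l.map M).prod i j := by
  intro l
  induction l with
  | nil => intro _ i j; simp [Matrix.one_apply]; positivity
  | cons a t ih =>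
      intro hl i j
      have h1 : ∀ i j, 0 ≤ M a i j := hM a (hl a (List.mem_cons_self))
      have h2 : ∀ i j, 0 ≤ (t.map M).prod i j :=
        ih fun x hx => hl x (List.mem_cons_of_mem _ hx)
      simp only [List.map_cons, List.prod_cons, Matrix.mul_apply]
      exact Finset.sum_nonneg fun l _ => mul_nonneg (h1 i l) (h2 l j)

lemma colsum_eq (P : Matrix (Fin 3) (Fin 3) ℝ) (j : Fin 3) :
    ((fun _ => (1 : ℝ)) ᵥ* P) j = ∑ i : Fin 3, P i j := by
  simp [Matrix.vecMul, dotProduct]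

theorem column_growth (n : ℕ) (hn : 1 ≤ n) (k : Fin n → ℤ) (hk : ∀ i, 1 ≤ k i) :
    cnorm ((List.ofFn fun i => A3 (k i)).prod) =
      ∑ i : Fin 3, ((List.ofFn fun i => A3 (k i)).prod) i 1 ∧
    cnorm ((List.ofFn fun i => B3 (k i)).prod) =
      ∑ i : Fin 3, ((List.ofFn fun i => B3 (k i)).prod) i 2 := by
  have hmem : ∀ x ∈ List.ofFn k, 1 ≤ x := by
    intro x hx
    rw [List.mem_ofFn] at hx
    obtain ⟨i, rfl⟩ := hx
    exact hk i
  have hA : (List.ofFn fun i => A3 (k i)) = (List.ofFn k).map A3 := by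
    rw [List.map_ofFn]; rfl
  have hB : (List.ofFn fun i => B3 (k i)) = (List.ofFn k).map B3 := by
    rw [List.map_ofFn]; rfl
  constructor
  · rw [hA]
    set P := ((List.ofFn k).map A3).prod with hP
    have hone : IA (fun _ => (1 : ℝ)) := by refine ⟨by norm_num, by norm_num, by norm_num, by norm_num⟩
    have hinv : IA ((fun _ => (1 : ℝ)) ᵥ* P) := IA_prod _ hmem _ hone
    have hnn : ∀ i j, 0 ≤ P i j := prod_nonneg_of A3 A3_nonneg _ hmem
    have habs : ∀ j, (∑ i : Fin 3, |P i j|) = ∑ i : Fin 3, P i j := by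
      intro j; exact Finset.sum_congr rfl fun i _ => abs_of_nonneg (hnn i j)
    obtain ⟨h0, h1, h2, h3⟩ := hinv
    simp only [colsum_eq] at h0 h1 h2 h3
    unfold cnorm
    apply le_antisymm
    · apply Finset.sup'_le
      intro j _
      rw [habs]
      fin_cases j
      · exact h1
      · exact le_refl _
      · exact h2
    · calc (∑ i : Fin 3, P i 1) = ∑ i : Fin 3, |P i 1| := (habs 1).symm
        _ ≤ _ := Finset.le_sup' (fun j : Fin 3 => ∑ i : Fin 3, |P i j|) (Finset.mem_univ (1 : Fin 3))
  · rw [hB]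
    set P := ((List.ofFn k).map B3).prod with hP
    have hone : IB (fun _ => (1 : ℝ)) := by
      refine ⟨by norm_num, by norm_num, by norm_num, by norm_num, by norm_num, by norm_num⟩
    have hinv : IB ((fun _ => (1 : ℝ)) ᵥ* P) := IB_prod _ hmem _ hone
    have hnn : ∀ i j, 0 ≤ P i j := prod_nonneg_of B3 B3_nonneg _ hmem
    have habs : ∀ j, (∑ i : Fin 3, |P i j|) = ∑ i : Fin 3, P i j := by
      intro j; exact Finset.sum_congr rfl fun i _ => abs_of_nonneg (hnn i j)
    obtain ⟨h0, h1, h2, h3, h4, h5⟩ := hinv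
    simp only [colsum_eq] at h4 h5
    unfold cnorm
    apply le_antisymm
    · apply Finset.sup'_le
      intro j _
      rw [habs]
      fin_cases j
      · exact h4
      · exact h5
      · exact le_refl _
    · calc (∑ i : Fin 3, P i 2) = ∑ i : Fin 3, |P i 2| := (habs 2).symm
        _ ≤ _ := Finset.le_sup' (fun j : Fin 3 => ∑ i : Fin 3, |P i j|) (Finset.mem_univ (2 : Fin 3))
end

section
/- Let m₀ = 15 and M = 8997/8668 (so M > 1). Let n ≥ m₀ and k₁,…,k_n ≥ 1 be integers with k_{n−m₀+1} = k_{n−m₀+2} = ⋯ = k_n = 2 (so the last m₀ matrices in the product A₃(k₁)⋯A₃(k_n) form A₃(2)^{m₀}). Then the recursion sequences satisfy a_{m₀} ≥ M·z_{m₀}, b_{m₀} ≥ M·(y_{m₀} + z_{m₀}), and c_{m₀} ≥ M·(x_{m₀} + y_{m₀}). -/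
/-!
The triples `(x_j, y_j, z_j)` and `(a_j, b_j, c_j)` are the vectors
`A₃(k_{n-j+1}) ⋯ A₃(k_n) e₂` and `B₃(k_{n-j+1}) ⋯ B₃(k_n) e₃`. When the last fifteen `k_i` equal `2`,
the step-15 vectors are therefore `A₃(2)¹⁵ e₂ = (4334, 2380, 2993)` and
`B₃(2)¹⁵ e₃ = (36428, 81853, 147494)`, and the three inequalities are numerical checks.
-/

open Matrix

theorem A3_mulVec (k : ℤ) (x y z : ℝ) :
    A3 k *ᵥ ![x, y, z] = ![(k - 1) * z + k * y, x, y + z] := by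
  ext i; fin_cases i <;> simp [A3]; ring

theorem B3_mulVec (k : ℤ) (a b c : ℝ) :
    B3 k *ᵥ ![a, b, c] = ![b, a + c, (k - 1) * a + k * c] := by
  ext i; fin_cases i <;> simp [B3]; ring

theorem eq_iterate_of_succ_eq {α : Type*} (f : α → α) (u : ℕ → α) {m : ℕ}
    (h : ∀ j, 1 ≤ j → j ≤ m → u (j + 1) = f (u j)) :
    ∀ j ≤ m, u (j + 1) = f^[j] (u 1) := by
  intro j hj
  induction j with
  | zero => rfl
  | succ j ih => rw [h (j + 1) (by omega) hj, ih (by omega), Function.iterate_succ_apply']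

theorem iterate_A3_two_mulVec :
    (A3 2 *ᵥ ·)^[15] ![0, 1, 0] = ![4334, 2380, 2993] := by
  norm_num [Function.iterate_succ_apply', A3_mulVec]

theorem iterate_B3_two_mulVec :
    (B3 2 *ᵥ ·)^[15] ![0, 0, 1] = ![36428, 81853, 147494] := by
  norm_num [Function.iterate_succ_apply', B3_mulVec]

theorem domination_at_m0_general (n : ℕ) (hn : 15 ≤ n) (k : ℕ → ℤ)
    (hk2 : ∀ i, n - 15 + 1 ≤ i → i ≤ n → k i = 2)
    (x y z a b c : ℕ → ℝ)
    (hx1 : x 1 = (k n : ℝ)) (hy1 : y 1 = 0) (hz1 : z 1 = 1)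
    (ha1 : a 1 = 0) (hb1 : b 1 = 1) (hc1 : c 1 = (k n : ℝ))
    (hx : ∀ j, 1 ≤ j → j ≤ n - 1 → x (j + 1) = ((k (n - j) : ℝ) - 1) * z j + (k (n - j) : ℝ) * y j)
    (hy : ∀ j, 1 ≤ j → j ≤ n - 1 → y (j + 1) = x j)
    (hz : ∀ j, 1 ≤ j → j ≤ n - 1 → z (j + 1) = y j + z j)
    (ha : ∀ j, 1 ≤ j → j ≤ n - 1 → a (j + 1) = b j)
    (hb : ∀ j, 1 ≤ j → j ≤ n - 1 → b (j + 1) = a j + c j)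
    (hc : ∀ j, 1 ≤ j → j ≤ n - 1 → c (j + 1) = ((k (n - j) : ℝ) - 1) * a j + (k (n - j) : ℝ) * c j) :
    a 15 ≥ ((8997 : ℝ) / 8668) * z 15 ∧
    b 15 ≥ ((8997 : ℝ) / 8668) * (y 15 + z 15) ∧
    c 15 ≥ ((8997 : ℝ) / 8668) * (x 15 + y 15) := by
  have hk : ∀ j ≤ 14, (k (n - j) : ℝ) = 2 := fun j hj => by
    rw [hk2 (n - j) (by omega) (by omega)]; norm_num
  have hA : ∀ j, 1 ≤ j → j ≤ 14 → ![x (j + 1), y (j + 1), z (j + 1)] = A3 2 *ᵥ ![x j, y j, z j] :=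
    fun j h1 h2 => by
      rw [A3_mulVec, hx j h1 (by omega), hy j h1 (by omega), hz j h1 (by omega), hk j h2]; norm_num
  have hB : ∀ j, 1 ≤ j → j ≤ 14 → ![a (j + 1), b (j + 1), c (j + 1)] = B3 2 *ᵥ ![a j, b j, c j] :=
    fun j h1 h2 => by
      rw [B3_mulVec, ha j h1 (by omega), hb j h1 (by omega), hc j h1 (by omega), hk j h2]; norm_num
  have hA1 : ![x 1, y 1, z 1] = A3 2 *ᵥ ![0, 1, 0] := by
    rw [A3_mulVec, hx1, hy1, hz1, ← Nat.sub_zero n, hk 0 (by omega)]; norm_num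
  have hB1 : ![a 1, b 1, c 1] = B3 2 *ᵥ ![0, 0, 1] := by
    rw [B3_mulVec, ha1, hb1, hc1, ← Nat.sub_zero n, hk 0 (by omega)]; norm_num
  have hxyz := eq_iterate_of_succ_eq _ (fun j => ![x j, y j, z j]) hA 14 le_rfl
  have habc := eq_iterate_of_succ_eq _ (fun j => ![a j, b j, c j]) hB 14 le_rfl
  rw [hA1, ← Function.iterate_succ_apply, iterate_A3_two_mulVec] at hxyz
  rw [hB1, ← Function.iterate_succ_apply, iterate_B3_two_mulVec] at habc
  simp only [vecCons_inj] at hxyz habc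
  obtain ⟨hx15, hy15, hz15, -⟩ := hxyz
  obtain ⟨ha15, hb15, hc15, -⟩ := habc
  rw [hx15, hy15, hz15, ha15, hb15, hc15]
  norm_num

/-- With `m₀ = 15` and `M = 8997/8668 > 1`: if the last `m₀` indices satisfy `k_i = 2`,
then the recursion sequences (the columns of the partial products from the right) satisfy
the domination estimates at step `m₀`.  The entries `k₁, …, k_n` are `k 1, …, k n`. -/
theorem domination_at_m0 (n : ℕ) (hn : 15 ≤ n) (k : ℕ → ℤ)
    (hk : ∀ i, 1 ≤ i → i ≤ n → 1 ≤ k i)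
    (hk2 : ∀ i, n - 15 + 1 ≤ i → i ≤ n → k i = 2)
    (x y z a b c : ℕ → ℝ)
    (hx1 : x 1 = (k n : ℝ)) (hy1 : y 1 = 0) (hz1 : z 1 = 1)
    (ha1 : a 1 = 0) (hb1 : b 1 = 1) (hc1 : c 1 = (k n : ℝ))
    (hx : ∀ j, 1 ≤ j → j ≤ n - 1 → x (j + 1) = ((k (n - j) : ℝ) - 1) * z j + (k (n - j) : ℝ) * y j)
    (hy : ∀ j, 1 ≤ j → j ≤ n - 1 → y (j + 1) = x j)
    (hz : ∀ j, 1 ≤ j → j ≤ n - 1 → z (j + 1) = y j + z j)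
    (ha : ∀ j, 1 ≤ j → j ≤ n - 1 → a (j + 1) = b j)
    (hb : ∀ j, 1 ≤ j → j ≤ n - 1 → b (j + 1) = a j + c j)
    (hc : ∀ j, 1 ≤ j → j ≤ n - 1 → c (j + 1) = ((k (n - j) : ℝ) - 1) * a j + (k (n - j) : ℝ) * c j) :
    a 15 ≥ ((8997 : ℝ) / 8668) * z 15 ∧
    b 15 ≥ ((8997 : ℝ) / 8668) * (y 15 + z 15) ∧
    c 15 ≥ ((8997 : ℝ) / 8668) * (x 15 + y 15) :=
  domination_at_m0_general n hn k hk2 x y z a b c hx1 hy1 hz1 ha1 hb1 hc1 hx hy hz ha hb hc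
end

section
/- Let d ≥ 2 and p ≥ 3 be integers, and let A = (a_{ij}) and Z = (z_{ij}) be d×d real matrices such that every entry of A is strictly positive, z_{ij} ≥ a_{ij} for all i, j, and there is at least one pair (ī, j̄) with z_{īj̄} > a_{īj̄}. Set α = z_{īj̄} − a_{īj̄} > 0, m = min_{i,j} a_{ij}, and M = max_{i,j} a_{ij}. Then with K = 1 + α·d^{p−3}·m^{p−1}/(d^{p−1}·M^p) > 1, one has K·(A^p)_{ij} ≤ (Z^p)_{ij} for all i, j ∈ {1,…,d}. -/
/-!
Write `p = k + 3` and `E` for the matrix whose only nonzero entry is `α` at `(ī, j̄)`. Entrywise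
monotonicity of products of nonnegative matrices gives
`Z^p = Z Z Z^(p-2) ≥ A (A + E) A^(p-2) = A^p + A E A^(p-2)`, and
`(A E A^(p-2))_ij = A_iī α (A^(p-2))_j̄j ≥ α d^(p-3) m^(p-1)`.
Since `(A^p)_ij ≤ d^(p-1) M^p`, this excess is at least `(K - 1) (A^p)_ij`.
-/

namespace Matrix

variable {n R : Type*} [Fintype n]

theorem mul_single_mul_apply [DecidableEq n] [Semiring R] (A B : Matrix n n R) (a b : n) (c : R)
    (i j : n) : (A * single a b c * B) i j = A i a * c * B b j := by
  rw [mul_apply, Finset.sum_eq_single b]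
  · simp
  · intro k _ hk
    simp [mul_single_apply_of_ne _ _ _ _ _ hk]
  · simp

section OrderedSemiring

variable [Semiring R] [PartialOrder R] [IsOrderedRing R]

theorem mul_apply_mono {A A' B B' : Matrix n n R}
    (hA : ∀ i j, 0 ≤ A i j) (hB : ∀ i j, 0 ≤ B i j)
    (hAA' : ∀ i j, A i j ≤ A' i j) (hBB' : ∀ i j, B i j ≤ B' i j) (i j : n) :
    (A * B) i j ≤ (A' * B') i j :=
  Finset.sum_le_sum fun k _ =>
    mul_le_mul (hAA' i k) (hBB' k j) (hB k j) ((hA i k).trans (hAA' i k))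

variable [DecidableEq n]

theorem pow_apply_mono {A Z : Matrix n n R}
    (hA : ∀ i j, 0 ≤ A i j) (hAZ : ∀ i j, A i j ≤ Z i j) (k : ℕ) (i j : n) :
    (A ^ k) i j ≤ (Z ^ k) i j := by
  induction k generalizing i j with
  | zero => rfl
  | succ k ih =>
    rw [pow_succ, pow_succ]
    exact mul_apply_mono (pow_apply_nonneg hA k) hA ih hAZ i j

theorem pow_add_two_apply_add_le {A Z : Matrix n n R}
    (hA : ∀ i j, 0 ≤ A i j) (hAZ : ∀ i j, A i j ≤ Z i j) {a b : n} {c : R}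
    (hc : 0 ≤ c) (habc : A a b + c ≤ Z a b) (k : ℕ) (i j : n) :
    (A ^ (k + 2)) i j + A i a * c * (A ^ k) b j ≤ (Z ^ (k + 2)) i j := by
  have hsingle : ∀ i j, 0 ≤ single a b c i j := fun i j => by
    by_cases h : a = i ∧ b = j <;> simp [h, hc]
  have hAE : ∀ i j, A i j + single a b c i j ≤ Z i j := fun i j => by
    by_cases h : a = i ∧ b = j
    · obtain ⟨rfl, rfl⟩ := h
      simpa using habc
    · simpa [single_apply, h] using hAZ i j
  calc (A ^ (k + 2)) i j + A i a * c * (A ^ k) b j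
      = (A * (A + single a b c) * A ^ k) i j := by
        rw [mul_add, add_mul, add_apply, mul_single_mul_apply, pow_succ', pow_succ', ← mul_assoc]
    _ ≤ (Z * Z * Z ^ k) i j :=
        mul_apply_mono (fun i j => Finset.sum_nonneg fun l _ =>
            mul_nonneg (hA i l) (add_nonneg (hA l j) (hsingle l j)))
          (pow_apply_nonneg hA k)
          (mul_apply_mono hA (fun i j => add_nonneg (hA i j) (hsingle i j)) hAZ hAE)
          (pow_apply_mono hA hAZ k) i j
    _ = (Z ^ (k + 2)) i j := by rw [pow_succ', pow_succ', ← mul_assoc]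

end OrderedSemiring

section OrderedCommSemiring

variable [DecidableEq n] [CommSemiring R] [PartialOrder R] [IsOrderedRing R]

theorem pow_succ_apply_ge {A : Matrix n n R} {m : R} (hm : 0 ≤ m) (hmA : ∀ i j, m ≤ A i j)
    (k : ℕ) (i j : n) : (Fintype.card n : R) ^ k * m ^ (k + 1) ≤ (A ^ (k + 1)) i j := by
  induction k generalizing i j with
  | zero => simpa using hmA i j
  | succ k ih =>
    calc (Fintype.card n : R) ^ (k + 1) * m ^ (k + 1 + 1)
        = ∑ _l : n, (Fintype.card n : R) ^ k * m ^ (k + 1) * m := by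
          simp only [Finset.sum_const, Finset.card_univ, nsmul_eq_mul]; ring
      _ ≤ (A ^ (k + 1 + 1)) i j := by
          rw [pow_succ A, mul_apply]
          exact Finset.sum_le_sum fun l _ =>
            mul_le_mul (ih i l) (hmA l j) hm
              (pow_apply_nonneg (fun i j => hm.trans (hmA i j)) _ i l)

theorem pow_succ_apply_le {A : Matrix n n R} {M : R} (hA : ∀ i j, 0 ≤ A i j)
    (hAM : ∀ i j, A i j ≤ M) (k : ℕ) (i j : n) :
    (A ^ (k + 1)) i j ≤ (Fintype.card n : R) ^ k * M ^ (k + 1) := by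
  induction k generalizing i j with
  | zero => simpa using hAM i j
  | succ k ih =>
    have hM : 0 ≤ M := (hA i j).trans (hAM i j)
    calc (A ^ (k + 1 + 1)) i j
        ≤ ∑ _l : n, (Fintype.card n : R) ^ k * M ^ (k + 1) * M := by
          rw [pow_succ A, mul_apply]
          exact Finset.sum_le_sum fun l _ =>
            mul_le_mul (ih i l) (hAM l j) (hA l j) (by positivity)
      _ = (Fintype.card n : R) ^ (k + 1) * M ^ (k + 1 + 1) := by
          simp only [Finset.sum_const, Finset.card_univ, nsmul_eq_mul]; ring

end OrderedCommSemiring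

end Matrix

theorem one_add_div_mul_le_of_add_le {𝕜 : Type*} [Field 𝕜] [LinearOrder 𝕜] [IsStrictOrderedRing 𝕜]
    {x z δ U : 𝕜} (hδ : 0 ≤ δ) (hU : 0 < U) (hxU : x ≤ U) (hxz : x + δ ≤ z) :
    (1 + δ / U) * x ≤ z :=
  calc (1 + δ / U) * x = x + δ * (x / U) := by ring
    _ ≤ x + δ * 1 := by gcongr; exact div_le_one_of_le₀ hxU hU.le
    _ = x + δ := by rw [mul_one]
    _ ≤ z := hxz

theorem power_entry_domination_general (d p : ℕ) (hp : 3 ≤ p)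
    (A Z : Matrix (Fin d) (Fin d) ℝ)
    (hApos : ∀ i j, 0 < A i j)
    (hAZ : ∀ i j, A i j ≤ Z i j)
    (ibar jbar : Fin d) (hstrict : A ibar jbar < Z ibar jbar)
    (α m M K : ℝ)
    (hα : α = Z ibar jbar - A ibar jbar)
    (hm : m = Finset.univ.inf'
      (Finset.univ_nonempty_iff.mpr ⟨(ibar, jbar)⟩ : (Finset.univ : Finset (Fin d × Fin d)).Nonempty)
      (fun q : Fin d × Fin d => A q.1 q.2))
    (hM : M = Finset.univ.sup'
      (Finset.univ_nonempty_iff.mpr ⟨(ibar, jbar)⟩ : (Finset.univ : Finset (Fin d × Fin d)).Nonempty)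
      (fun q : Fin d × Fin d => A q.1 q.2))
    (hK : K = 1 + α * (d : ℝ) ^ (p - 3) * m ^ (p - 1) / ((d : ℝ) ^ (p - 1) * M ^ p)) :
    1 < K ∧ ∀ i j, K * (A ^ p) i j ≤ (Z ^ p) i j := by
  obtain ⟨k, rfl⟩ : ∃ k, p = k + 3 := ⟨p - 3, by omega⟩
  rw [show k + 3 - 3 = k by omega, show k + 3 - 1 = k + 2 by omega] at hK
  have hA : ∀ i j, 0 ≤ A i j := fun i j => (hApos i j).le
  have hmA : ∀ i j, m ≤ A i j := fun i j => hm ▸ Finset.inf'_le _ (Finset.mem_univ (i, j))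
  have hAM : ∀ i j, A i j ≤ M := fun i j => 
    hM ▸ Finset.le_sup' (fun q : Fin d × Fin d => A q.1 q.2) (Finset.mem_univ (i, j))
  have hm0 : 0 < m := hm ▸ (Finset.lt_inf'_iff _).2 fun q _ => hApos q.1 q.2
  have hM0 : 0 < M := hm0.trans_le ((hmA ibar jbar).trans (hAM ibar jbar))
  have hα0 : 0 < α := hα ▸ sub_pos.2 hstrict
  have hd0 : (0 : ℝ) < d := Nat.cast_pos.2 ibar.pos
  set δ := α * (d : ℝ) ^ k * m ^ (k + 2)
  set U := (d : ℝ) ^ (k + 2) * M ^ (k + 3)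
  have hgap : ∀ i j, (A ^ (k + 3)) i j + δ ≤ (Z ^ (k + 3)) i j := fun i j => by
    have hpath : (d : ℝ) ^ k * m ^ (k + 1) ≤ (A ^ (k + 1)) jbar j := by
      simpa using Matrix.pow_succ_apply_ge hm0.le hmA k jbar j
    calc (A ^ (k + 3)) i j + δ
        = (A ^ (k + 3)) i j + m * α * ((d : ℝ) ^ k * m ^ (k + 1)) := by ring
      _ ≤ (A ^ (k + 3)) i j + A i ibar * α * (A ^ (k + 1)) jbar j := by
        gcongr
        · exact mul_nonneg (hA i ibar) hα0.le
        · exact hmA i ibar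
      _ ≤ (Z ^ (k + 3)) i j :=
        Matrix.pow_add_two_apply_add_le hA hAZ hα0.le (by rw [hα, add_sub_cancel]) (k + 1) i j
  have hbound : ∀ i j, (A ^ (k + 3)) i j ≤ U := by
    simpa using Matrix.pow_succ_apply_le hA hAM (k + 2)
  exact ⟨hK ▸ lt_add_of_pos_right 1 (by positivity), fun i j =>
    hK ▸ one_add_div_mul_le_of_add_le (by positivity) (by positivity) (hbound i j) (hgap i j)⟩

/-- Key claim of the criterion for positivity of the second Lyapunov exponent:
if `A` has strictly positive entries, `A ≤ Z` entrywise, and `Z` strictly exceeds `A`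
in at least one entry `(ī, j̄)`, then with `α = Z_{īj̄} − A_{īj̄}`, `m = min_{ij} A_{ij}`,
`M = max_{ij} A_{ij}` and `K = 1 + α d^{p−3} m^{p−1} / (d^{p−1} M^p)`, one has `K > 1` and
`K (A^p)_{ij} ≤ (Z^p)_{ij}` for all `i, j`. -/
theorem power_entry_domination (d p : ℕ) (hd : 2 ≤ d) (hp : 3 ≤ p)
    (A Z : Matrix (Fin d) (Fin d) ℝ)
    (hApos : ∀ i j, 0 < A i j)
    (hAZ : ∀ i j, A i j ≤ Z i j)
    (ibar jbar : Fin d) (hstrict : A ibar jbar < Z ibar jbar)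
    (α m M K : ℝ)
    (hα : α = Z ibar jbar - A ibar jbar)
    (hm : m = Finset.univ.inf'
      (Finset.univ_nonempty_iff.mpr ⟨(ibar, jbar)⟩ : (Finset.univ : Finset (Fin d × Fin d)).Nonempty)
      (fun q : Fin d × Fin d => A q.1 q.2))
    (hM : M = Finset.univ.sup'
      (Finset.univ_nonempty_iff.mpr ⟨(ibar, jbar)⟩ : (Finset.univ : Finset (Fin d × Fin d)).Nonempty)
      (fun q : Fin d × Fin d => A q.1 q.2))
    (hK : K = 1 + α * (d : ℝ) ^ (p - 3) * m ^ (p - 1) / ((d : ℝ) ^ (p - 1) * M ^ p)) :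
    1 < K ∧ ∀ i j, K * (A ^ p) i j ≤ (Z ^ p) i j :=
  power_entry_domination_general d p hp A Z hApos hAZ ibar jbar hstrict α m M K hα hm hM hK
end

section
/- Let J₄ be the 4×4 integer matrix with rows (0, 0, 1, 0), (0, 1, 0, 0), (1, 0, 0, 0), (−1, −1, −1, −1). Then J₄ is invertible and for every integer k ≥ 1 one has Z₄(k) = J₄ · A₄(k)⁻¹ · J₄⁻¹, equivalently Z₄(k)·J₄ = J₄·A₄(k)⁻¹. -/
/-- The matrix `A₄(k)` (over `ℤ`) with rows `(0,0,k,k−1)`, `(1,0,0,0)`, `(0,1,0,0)`, `(0,0,1,1)`. -/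
def A4 (k : ℤ) : Matrix (Fin 4) (Fin 4) ℤ :=
  !![0, 0, k, k - 1; 1, 0, 0, 0; 0, 1, 0, 0; 0, 0, 1, 1]

/-- The matrix `Z₄(k)` (over `ℤ`) with rows `(k−1,k−1,k,k−1)`, `(1,0,0,0)`, `(0,1,0,0)`, `(0,0,1,1)`. -/
def Z4 (k : ℤ) : Matrix (Fin 4) (Fin 4) ℤ :=
  !![k - 1, k - 1, k, k - 1; 1, 0, 0, 0; 0, 1, 0, 0; 0, 0, 1, 1]

/-- The conjugating matrix `J₄` with rows `(0,0,1,0)`, `(0,1,0,0)`, `(1,0,0,0)`, `(−1,−1,−1,−1)`. -/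
def J4 : Matrix (Fin 4) (Fin 4) ℤ :=
  !![0, 0, 1, 0; 0, 1, 0, 0; 1, 0, 0, 0; -1, -1, -1, -1]

theorem J4_mul_self : J4 * J4 = 1 := by
  ext i j
  fin_cases i <;> fin_cases j <;> simp [J4, Matrix.mul_apply, Fin.sum_univ_four]

theorem inv_J4 : J4⁻¹ = J4 :=
  Matrix.inv_eq_left_inv J4_mul_self

theorem inv_A4 (k : ℤ) :
    (A4 k)⁻¹ = !![0, 1, 0, 0; 0, 0, 1, 0; 1, 0, 0, 1 - k; -1, 0, 0, k] := by
  refine Matrix.inv_eq_right_inv ?_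
  ext i j
  fin_cases i <;> fin_cases j <;> simp [A4, Matrix.mul_apply, Fin.sum_univ_four, mul_sub, mul_comm]

theorem Z4_mul_J4 (k : ℤ) : Z4 k * J4 = J4 * (A4 k)⁻¹ := by
  rw [inv_A4]
  ext i j
  fin_cases i <;> fin_cases j <;>
    simp [Z4, J4, Matrix.mul_apply, Fin.sum_univ_four, ← sub_eq_add_neg]

/-- `J₄` is invertible and conjugates `A₄(k)⁻¹` to `Z₄(k)`, for every `k ≥ 1`. -/
theorem Z4_conjugate_A4_inv :
    IsUnit J4 ∧
    ∀ k : ℤ, 1 ≤ k →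
      Z4 k * J4 = J4 * (A4 k)⁻¹ ∧
      Z4 k = J4 * (A4 k)⁻¹ * J4⁻¹ := by
  refine ⟨IsUnit.of_mul_eq_one J4 J4_mul_self, fun k _ => ⟨Z4_mul_J4 k, ?_⟩⟩
  rw [inv_J4, ← Z4_mul_J4, mul_assoc, J4_mul_self, mul_one]
end

section
/- For all integers d ≥ 3 and k ≥ 1, one has Z_d(k)·J_d = J_d·A_d(k)⁻¹, i.e. Z_d(k) = J_d · A_d(k)⁻¹ · J_d⁻¹, where the conjugating matrix J_d does not depend on k. -/
/-- The matrix `A_d(k)` (over `ℤ`, indices `0, …, d−1`): `A_d(k)_{0,d−2} = k`,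
`A_d(k)_{0,d−1} = k−1`, subdiagonal entries `A_d(k)_{i,i−1} = 1` for `1 ≤ i ≤ d−1`,
`A_d(k)_{d−1,d−1} = 1`, and all other entries `0`.  (This is the `1`-indexed matrix of
the paper with `A_d(k)_{1,d−1} = k`, `A_d(k)_{1,d} = k−1`, `A_d(k)_{i+1,i} = 1` for
`1 ≤ i ≤ d−2`, `A_d(k)_{d,d−1} = A_d(k)_{d,d} = 1`.) -/
def Ad (d : ℕ) (k : ℤ) : Matrix (Fin d) (Fin d) ℤ :=
  Matrix.of fun i j =>
    if i.val = 0 then (if j.val = d - 2 then k else if j.val = d - 1 then k - 1 else 0)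
    else (if i.val = j.val + 1 then 1 else 0) +
      (if i.val = d - 1 ∧ j.val = d - 1 then 1 else 0)

/-- The matrix `D_d = I_d + Σ_{j=2}^d E_{1j}`: the identity with first row all ones. -/
def Dd (d : ℕ) : Matrix (Fin d) (Fin d) ℤ :=
  Matrix.of fun i j => if i.val = 0 then 1 else if i = j then 1 else 0

/-- The matrix `C_d`: `(C_d)_{1,d−1} = 1`, `(C_d)_{i+1,i} = 1` for `1 ≤ i ≤ d−2`,
`(C_d)_{d,d−1} = (C_d)_{d,d} = 1` (1-indexed), all other entries `0`. -/
def Cd (d : ℕ) : Matrix (Fin d) (Fin d) ℤ :=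
  Matrix.of fun i j =>
    if i.val = 0 then (if j.val = d - 2 then 1 else 0)
    else (if i.val = j.val + 1 then 1 else 0) +
      (if i.val = d - 1 ∧ j.val = d - 1 then 1 else 0)

/-- The matrix `Z_d(k) = D_d^{k−1} · C_d` of the accelerated induction on lengths. -/
def Zd (d : ℕ) (k : ℕ) : Matrix (Fin d) (Fin d) ℤ :=
  Dd d ^ (k - 1) * Cd d

/-- The conjugating matrix `J_d`: `(J_d)_{i,d−i} = 1` for `1 ≤ i ≤ d−1` (1-indexed),
last row all `−1`, other entries `0`. -/
def Jd (d : ℕ) : Matrix (Fin d) (Fin d) ℤ :=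
  Matrix.of fun i j =>
    if i.val = d - 1 then -1 else if i.val + j.val = d - 2 then 1 else 0

/-!
Let `U = 1 + E_{1,d}` (a transvection) and `X = C_d J_d`. Reading off the first rows gives
`A_d(k) = U^{k-1} C_d`, and a direct computation gives `U X D_d = X`, hence
`U^{k-1} X D_d^{k-1} = X`. Therefore
`A_d(k) J_d Z_d(k) = U^{k-1} X D_d^{k-1} C_d = X C_d = C_d J_d C_d = J_d`,
and since `J_d² = 1` this says `Z_d(k) J_d = J_d A_d(k)⁻¹`.
-/

open Matrix

theorem Matrix.transvection_pow {n R : Type*} [Fintype n] [DecidableEq n] [CommRing R]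
    {i j : n} (h : i ≠ j) (c : R) (m : ℕ) :
    transvection i j c ^ m = transvection i j (m * c) := by
  induction m with
  | zero => simp
  | succ m ih =>
    rw [pow_succ, ih, transvection_mul_transvection_same _ _ h]
    push_cast
    ring_nf

theorem pow_mul_mul_pow_eq_of_mul_mul_eq {M : Type*} [Monoid M] {a x b : M}
    (h : a * x * b = x) (m : ℕ) : a ^ m * x * b ^ m = x := by
  induction m with
  | zero => simp
  | succ m ih =>
    calc a ^ (m + 1) * x * b ^ (m + 1) = a ^ m * (a * x * b) * b ^ m := by
          rw [pow_succ, pow_succ']; simp only [mul_assoc]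
      _ = x := by rw [h, ih]

lemma mul_Jd_apply {n : ℕ} (M : Matrix (Fin (n + 1)) (Fin (n + 1)) ℤ) (i j : Fin (n + 1)) :
    (M * Jd (n + 1)) i j =
      (if h : j.val < n then M i ⟨n - 1 - j, by omega⟩ else 0) - M i (Fin.last n) := by
  rw [mul_apply]
  by_cases hj : j.val < n
  · rw [Fintype.sum_eq_add ⟨n - 1 - j, by omega⟩ (Fin.last n) (Fin.ne_of_val_ne (by simp; omega))]
    · simp only [Jd, of_apply, Fin.val_last, dif_pos hj]
      split_ifs <;> omega
    · rintro x ⟨h1, h2⟩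
      have h1 := Fin.val_ne_of_ne h1
      have h2 := Fin.val_ne_of_ne h2
      simp only [Jd, of_apply, Fin.val_last] at h1 h2 ⊢
      split_ifs <;> omega
  · rw [Fintype.sum_eq_single (Fin.last n)]
    · simp only [Jd, of_apply, Fin.val_last, dif_neg hj]
      split_ifs <;> omega
    · intro x hx
      have hx := Fin.val_ne_of_ne hx
      simp only [Jd, of_apply, Fin.val_last] at hx ⊢
      split_ifs <;> omega

lemma mul_Cd_apply {n : ℕ} (M : Matrix (Fin (n + 2)) (Fin (n + 2)) ℤ) (i j : Fin (n + 2)) :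
    (M * Cd (n + 2)) i j =
      (if h : j.val ≤ n then M i ⟨j + 1, by omega⟩ else M i j) +
        (if j.val = n then M i 0 else 0) := by
  rw [mul_apply]
  by_cases hj : j.val ≤ n
  · rw [Fintype.sum_eq_add ⟨j + 1, by omega⟩ 0 (Fin.ne_of_val_ne (by simp))]
    · simp only [Cd, of_apply, Fin.val_zero, dif_pos hj]
      split_ifs <;> first | omega | simp_all
    · rintro x ⟨h1, h2⟩
      have h1 := Fin.val_ne_of_ne h1
      have h2 := Fin.val_ne_of_ne h2
      simp only [Cd, of_apply, Fin.val_zero] at h2 ⊢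
      split_ifs <;> omega
  · rw [Fintype.sum_eq_single j]
    · simp only [Cd, of_apply, dif_neg hj]
      split_ifs <;> omega
    · intro x hx
      have hx := Fin.val_ne_of_ne hx
      simp only [Cd, of_apply]
      split_ifs <;> omega

lemma mul_Dd_apply {n : ℕ} (M : Matrix (Fin (n + 1)) (Fin (n + 1)) ℤ) (i j : Fin (n + 1)) :
    (M * Dd (n + 1)) i j = M i 0 + if j = 0 then 0 else M i j := by
  rw [mul_apply]
  by_cases hj : j = 0
  · rw [Fintype.sum_eq_single 0]
    · simp [Dd, hj]
    · intro x hx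
      simp [Dd, hx, hj]
  · rw [Fintype.sum_eq_add 0 j (Ne.symm hj)]
    · simp [Dd, hj]
    · rintro x ⟨h1, h2⟩
      simp [Dd, h1, h2]

def Qd (d : ℕ) : Matrix (Fin d) (Fin d) ℤ :=
  Matrix.of fun i j =>
    if i.val = d - 1 then (if j.val = 0 then 0 else -1)
    else if i.val = 0 then (if j.val = 0 then 1 else 0)
    else if i.val + j.val = d - 1 then 1 else 0

lemma Jd_mul_Jd (d : ℕ) : Jd d * Jd d = 1 := by
  rcases d with _ | n
  · exact Subsingleton.elim _ _
  ext i j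
  rw [mul_Jd_apply, one_apply]
  simp only [Jd, of_apply, Fin.ext_iff, Fin.val_last]
  split_ifs <;> omega

lemma Cd_mul_Jd (n : ℕ) : Cd (n + 2) * Jd (n + 2) = Qd (n + 2) := by
  ext i j
  rw [mul_Jd_apply]
  simp only [Cd, Qd, of_apply, Fin.val_last]
  split_ifs <;> omega

lemma Qd_mul_Cd (n : ℕ) : Qd (n + 2) * Cd (n + 2) = Jd (n + 2) := by
  ext i j
  rw [mul_Cd_apply]
  simp only [Qd, Jd, of_apply, Fin.val_zero]
  split_ifs <;> first | omega | simp_all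

lemma transvection_mul_Qd_mul_Dd (n : ℕ) :
    transvection 0 (Fin.last (n + 1)) 1 * Qd (n + 2) * Dd (n + 2) = Qd (n + 2) := by
  ext i j
  rw [mul_Dd_apply]
  rcases eq_or_ne i 0 with rfl | hi
  · simp only [transvection_mul_apply_same, Qd, of_apply, Fin.val_last, Fin.val_zero,
      ← Fin.val_eq_zero_iff]
    split_ifs <;> omega
  · have hi0 := Fin.val_ne_zero_iff.mpr hi
    simp only [transvection_mul_apply_of_ne _ _ _ _ hi, Qd, of_apply, Fin.val_zero, add_zero,
      ← Fin.val_eq_zero_iff]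
    split_ifs <;> omega

lemma Ad_eq_transvection_mul_Cd (n : ℕ) (k : ℤ) :
    Ad (n + 2) k = transvection 0 (Fin.last (n + 1)) (k - 1) * Cd (n + 2) := by
  ext i j
  rcases eq_or_ne i 0 with rfl | hi
  · rw [transvection_mul_apply_same]
    simp only [Ad, Cd, of_apply, Fin.val_last, Fin.val_zero]
    split_ifs <;> first | omega | simp_all
  · rw [transvection_mul_apply_of_ne _ _ _ _ hi]
    simp [Ad, Cd, hi]

/-- For all `d ≥ 3` and `k ≥ 1`, `Z_d(k)·J_d = J_d·A_d(k)⁻¹`, i.e.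
`Z_d(k) = J_d · A_d(k)⁻¹ · J_d⁻¹`, the conjugating matrix `J_d` being independent of `k`. -/
theorem Zd_conjugate_Ad_inv (d : ℕ) (hd : 3 ≤ d) (k : ℕ) (hk : 1 ≤ k) :
    Zd d k * Jd d = Jd d * (Ad d (k : ℤ))⁻¹ ∧
    Zd d k = Jd d * (Ad d (k : ℤ))⁻¹ * (Jd d)⁻¹ := by
  obtain ⟨n, rfl⟩ : ∃ n, d = n + 2 := ⟨d - 2, by omega⟩
  obtain ⟨m, rfl⟩ : ∃ m, k = m + 1 := ⟨k - 1, by omega⟩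
  set U := transvection (0 : Fin (n + 2)) (Fin.last (n + 1)) (1 : ℤ)
  have hJ : Jd (n + 2) * Jd (n + 2) = 1 := Jd_mul_Jd (n + 2)
  have hA : Ad (n + 2) ((m + 1 : ℕ) : ℤ) = U ^ m * Cd (n + 2) := by
    rw [Ad_eq_transvection_mul_Cd, transvection_pow Fin.last_pos.ne]
    push_cast
    ring_nf
  have hAJZ : Ad (n + 2) ((m + 1 : ℕ) : ℤ) * Jd (n + 2) * Zd (n + 2) (m + 1) = Jd (n + 2) :=
    calc _ = U ^ m * (Cd (n + 2) * Jd (n + 2)) * Dd (n + 2) ^ m * Cd (n + 2) := by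
          rw [hA, Zd, Nat.add_sub_cancel]; simp only [mul_assoc]
      _ = Qd (n + 2) * Cd (n + 2) := by
          rw [Cd_mul_Jd, pow_mul_mul_pow_eq_of_mul_mul_eq (transvection_mul_Qd_mul_Dd n)]
      _ = Jd (n + 2) := Qd_mul_Cd n
  have hAinv : (Ad (n + 2) ((m + 1 : ℕ) : ℤ))⁻¹ = Jd (n + 2) * Zd (n + 2) (m + 1) * Jd (n + 2) :=
    inv_eq_right_inv (by rw [← mul_assoc, ← mul_assoc, hAJZ, hJ])
  have hJinv : (Jd (n + 2))⁻¹ = Jd (n + 2) := inv_eq_right_inv hJ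
  constructor
  · rw [hAinv, ← mul_assoc, ← mul_assoc, hJ, one_mul]
  · rw [hAinv, hJinv, ← mul_assoc, ← mul_assoc, hJ, one_mul, mul_assoc, hJ, mul_one]
end

section
/- For every integer d ≥ 3, one has A_d(1)·T_{1d}·A_d(1)⁻¹ = I_d + E_{2d} − E_{21} = T_{2d}·T_{21}⁻¹. -/
/-- Explicit inverse of `Ad d 1`. -/
def Bd (d : ℕ) : Matrix (Fin d) (Fin d) ℤ :=
  Matrix.of fun i j =>
    if i.val = d - 1 then (if j.val = d - 1 then 1 else if j.val = 0 then -1 else 0)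
    else if i.val = d - 2 then (if j.val = 0 then 1 else 0)
    else (if j.val = i.val + 1 then 1 else 0)

lemma sum_if_val {d m : ℕ} (hm : m < d) (f : Fin d → ℤ) :
    (∑ k : Fin d, if (k : ℕ) = m then f k else 0) = f ⟨m, hm⟩ := by
  rw [Finset.sum_eq_single (⟨m, hm⟩ : Fin d)]
  · simp
  · intro b _ hb
    rw [if_neg]
    exact fun h => hb (Fin.ext h)
  · simp

lemma Ad_mul_Bd (d : ℕ) (hd : 3 ≤ d) : Ad d 1 * Bd d = 1 := by
  ext i j
  rw [Matrix.mul_apply, Matrix.one_apply]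
  by_cases hi0 : (i : ℕ) = 0
  · have hterm : ∀ k : Fin d, Ad d 1 i k * Bd d k j
        = if (k : ℕ) = d - 2 then Bd d k j else 0 := by
      intro k
      simp only [Ad, Matrix.of_apply]
      rw [if_pos hi0]
      split_ifs <;> first | ring1 | (exfalso; omega)
    rw [Finset.sum_congr rfl (fun k _ => hterm k),
      sum_if_val (show d - 2 < d by omega)]
    simp only [Bd, Matrix.of_apply, Fin.ext_iff, Fin.val_mk, true_and, and_true]
    split_ifs <;> first | rfl | (exfalso; omega)
  · by_cases hi1 : (i : ℕ) = d - 1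
    · have hterm : ∀ k : Fin d, Ad d 1 i k * Bd d k j
          = (if (k : ℕ) = d - 2 then Bd d k j else 0)
            + (if (k : ℕ) = d - 1 then Bd d k j else 0) := by
        intro k
        simp only [Ad, Matrix.of_apply]
        rw [if_neg hi0]
        split_ifs <;> first | ring1 | (exfalso; omega)
      rw [Finset.sum_congr rfl (fun k _ => hterm k), Finset.sum_add_distrib,
        sum_if_val (show d - 2 < d by omega), sum_if_val (show d - 1 < d by omega)]
      simp only [Bd, Matrix.of_apply, Fin.ext_iff, Fin.val_mk, true_and, and_true]
      split_ifs <;> first | ring1 | (exfalso; omega)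
    · -- 1 ≤ i ≤ d - 2
      have hterm : ∀ k : Fin d, Ad d 1 i k * Bd d k j
          = if (k : ℕ) = (i : ℕ) - 1 then Bd d k j else 0 := by
        intro k
        simp only [Ad, Matrix.of_apply]
        rw [if_neg hi0]
        split_ifs <;> first | ring1 | (exfalso; omega)
      rw [Finset.sum_congr rfl (fun k _ => hterm k),
        sum_if_val (show (i : ℕ) - 1 < d by omega)]
      have hival : (i : ℕ) < d := i.isLt
      simp only [Bd, Matrix.of_apply, Fin.ext_iff, Fin.val_mk, true_and, and_true]
      split_ifs <;> first | rfl | (exfalso; omega)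

/-- For every `d ≥ 3`,
`A_d(1)·T_{1d}·A_d(1)⁻¹ = I_d + E_{2d} − E_{21} = T_{2d}·T_{21}⁻¹`
(indices are `1`-based in the names: `T_{1d} = I + E_{1d}`, etc.). -/
theorem Ad_conj_T1d (d : ℕ) (hd : 3 ≤ d) :
    Ad d 1 * (1 + Matrix.single (⟨0, by omega⟩ : Fin d) (⟨d - 1, by omega⟩ : Fin d) (1 : ℤ)) *
        (Ad d 1)⁻¹ =
      1 + Matrix.single (⟨1, by omega⟩ : Fin d) (⟨d - 1, by omega⟩ : Fin d) (1 : ℤ) -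
        Matrix.single (⟨1, by omega⟩ : Fin d) (⟨0, by omega⟩ : Fin d) (1 : ℤ) ∧
    Ad d 1 * (1 + Matrix.single (⟨0, by omega⟩ : Fin d) (⟨d - 1, by omega⟩ : Fin d) (1 : ℤ)) *
        (Ad d 1)⁻¹ =
      (1 + Matrix.single (⟨1, by omega⟩ : Fin d) (⟨d - 1, by omega⟩ : Fin d) (1 : ℤ)) *
        (1 + Matrix.single (⟨1, by omega⟩ : Fin d) (⟨0, by omega⟩ : Fin d) (1 : ℤ))⁻¹ := by
  have h0 : 0 < d := by omega
  have h1d : 1 < d := by omega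
  have hDd : d - 1 < d := by omega
  have hD2d : d - 2 < d := by omega
  have hAB : Ad d 1 * Bd d = 1 := Ad_mul_Bd d hd
  have hinv : (Ad d 1)⁻¹ = Bd d := Matrix.inv_eq_right_inv hAB
  -- structural identity 1 : Ad · E₀,D = E₁,D
  have h1 : Ad d 1 * Matrix.single (⟨0, h0⟩ : Fin d) (⟨d - 1, hDd⟩ : Fin d) (1 : ℤ)
      = Matrix.single (⟨1, h1d⟩ : Fin d) (⟨d - 1, hDd⟩ : Fin d) (1 : ℤ) := by
    ext i j
    rw [Matrix.mul_apply]
    have hterm : ∀ k : Fin d,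
        Ad d 1 i k * Matrix.single (⟨0, h0⟩ : Fin d) (⟨d - 1, hDd⟩ : Fin d) (1 : ℤ) k j
        = if (k : ℕ) = 0 then (Ad d 1 i k * if (j : ℕ) = d - 1 then 1 else 0) else 0 := by
      intro k
      have hklt := k.isLt
      simp only [Matrix.single, Matrix.of_apply, Fin.ext_iff, Fin.val_mk, true_and, and_true]
      split_ifs <;> first | ring1 | (exfalso; omega)
    rw [Finset.sum_congr rfl (fun k _ => hterm k), sum_if_val h0]
    have hilt := i.isLt
    have hjlt := j.isLt
    simp only [Ad, Matrix.single, Matrix.of_apply, Fin.ext_iff, Fin.val_mk, true_and, and_true]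
    split_ifs <;> first | ring1 | (exfalso; omega)
  -- structural identity 2 : E₁,D · Ad = E₁,D₂ + E₁,D
  have h2 : Matrix.single (⟨1, h1d⟩ : Fin d) (⟨d - 1, hDd⟩ : Fin d) (1 : ℤ) * Ad d 1
      = Matrix.single (⟨1, h1d⟩ : Fin d) (⟨d - 2, hD2d⟩ : Fin d) (1 : ℤ)
        + Matrix.single (⟨1, h1d⟩ : Fin d) (⟨d - 1, hDd⟩ : Fin d) (1 : ℤ) := by
    ext i j
    rw [Matrix.mul_apply, Matrix.add_apply]
    have hterm : ∀ k : Fin d,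
        Matrix.single (⟨1, h1d⟩ : Fin d) (⟨d - 1, hDd⟩ : Fin d) (1 : ℤ) i k * Ad d 1 k j
        = if (k : ℕ) = d - 1 then ((if (i : ℕ) = 1 then 1 else 0) * Ad d 1 k j) else 0 := by
      intro k
      have hklt := k.isLt
      simp only [Matrix.single, Matrix.of_apply, Fin.ext_iff, Fin.val_mk, true_and, and_true]
      split_ifs <;> first | ring1 | (exfalso; omega)
    rw [Finset.sum_congr rfl (fun k _ => hterm k), sum_if_val hDd]
    have hilt := i.isLt
    have hjlt := j.isLt
    simp only [Ad, Matrix.single, Matrix.of_apply, Fin.ext_iff, Fin.val_mk, true_and, and_true]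
    split_ifs <;> first | ring1 | (exfalso; omega)
  -- structural identity 3 : E₁,₀ · Ad = E₁,D₂
  have h3 : Matrix.single (⟨1, h1d⟩ : Fin d) (⟨0, h0⟩ : Fin d) (1 : ℤ) * Ad d 1
      = Matrix.single (⟨1, h1d⟩ : Fin d) (⟨d - 2, hD2d⟩ : Fin d) (1 : ℤ) := by
    ext i j
    rw [Matrix.mul_apply]
    have hterm : ∀ k : Fin d,
        Matrix.single (⟨1, h1d⟩ : Fin d) (⟨0, h0⟩ : Fin d) (1 : ℤ) i k * Ad d 1 k j
        = if (k : ℕ) = 0 then ((if (i : ℕ) = 1 then 1 else 0) * Ad d 1 k j) else 0 := by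
      intro k
      have hklt := k.isLt
      simp only [Matrix.single, Matrix.of_apply, Fin.ext_iff, Fin.val_mk, true_and, and_true]
      split_ifs <;> first | ring1 | (exfalso; omega)
    rw [Finset.sum_congr rfl (fun k _ => hterm k), sum_if_val h0]
    have hilt := i.isLt
    have hjlt := j.isLt
    simp only [Ad, Matrix.single, Matrix.of_apply, Fin.ext_iff, Fin.val_mk, true_and, and_true]
    split_ifs <;> first | ring1 | (exfalso; omega)
  have hmain : Ad d 1 * (1 + Matrix.single (⟨0, h0⟩ : Fin d) (⟨d - 1, hDd⟩ : Fin d) (1 : ℤ))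
      = (1 + Matrix.single (⟨1, h1d⟩ : Fin d) (⟨d - 1, hDd⟩ : Fin d) (1 : ℤ)
          - Matrix.single (⟨1, h1d⟩ : Fin d) (⟨0, h0⟩ : Fin d) (1 : ℤ)) * Ad d 1 := by
    rw [Matrix.mul_add, Matrix.mul_one, h1, Matrix.sub_mul, Matrix.add_mul,
      Matrix.one_mul, h2, h3]
    abel
  have key : Ad d 1 * (1 + Matrix.single (⟨0, h0⟩ : Fin d) (⟨d - 1, hDd⟩ : Fin d) (1 : ℤ))
        * (Ad d 1)⁻¹
      = 1 + Matrix.single (⟨1, h1d⟩ : Fin d) (⟨d - 1, hDd⟩ : Fin d) (1 : ℤ)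
        - Matrix.single (⟨1, h1d⟩ : Fin d) (⟨0, h0⟩ : Fin d) (1 : ℤ) := by
    rw [hinv, hmain, Matrix.mul_assoc, hAB, Matrix.mul_one]
  refine ⟨key, key.trans ?_⟩
  -- (1 + E₁₀)⁻¹ = 1 - E₁₀
  have hEE : Matrix.single (⟨1, h1d⟩ : Fin d) (⟨0, h0⟩ : Fin d) (1 : ℤ)
      * Matrix.single (⟨1, h1d⟩ : Fin d) (⟨0, h0⟩ : Fin d) (1 : ℤ) = 0 :=
    Matrix.single_mul_single_of_ne _ _ _ _
      (fun h => by have := Fin.ext_iff.mp h; simp at this) _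
  have hT : (1 + Matrix.single (⟨1, h1d⟩ : Fin d) (⟨0, h0⟩ : Fin d) (1 : ℤ))
      * (1 - Matrix.single (⟨1, h1d⟩ : Fin d) (⟨0, h0⟩ : Fin d) (1 : ℤ)) = 1 := by
    rw [Matrix.mul_sub, Matrix.mul_one, Matrix.add_mul, Matrix.one_mul, hEE]
    abel
  have hTinv : (1 + Matrix.single (⟨1, h1d⟩ : Fin d) (⟨0, h0⟩ : Fin d) (1 : ℤ))⁻¹
      = 1 - Matrix.single (⟨1, h1d⟩ : Fin d) (⟨0, h0⟩ : Fin d) (1 : ℤ) :=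
    Matrix.inv_eq_right_inv hT
  have hED : Matrix.single (⟨1, h1d⟩ : Fin d) (⟨d - 1, hDd⟩ : Fin d) (1 : ℤ)
      * Matrix.single (⟨1, h1d⟩ : Fin d) (⟨0, h0⟩ : Fin d) (1 : ℤ) = 0 :=
    Matrix.single_mul_single_of_ne _ _ _ _
      (fun h => by have := Fin.ext_iff.mp h; simp at this; omega) _
  rw [hTinv, Matrix.mul_sub, Matrix.mul_one, Matrix.add_mul, Matrix.one_mul, hED]
  abel
end
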